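/- For the function Φ(s,i) = 1/i + 1/s on (0,1)², the operator ℒΦ(s,i,𝔳,ℓ) = (μ_ℓ(1−q₀) − λ_ℓ si − (μ_ℓ+p₀)s + γ_ℓ i + ε_ℓ 𝔳)·(−1/s²) + (λ_ℓ si − (μ_ℓ+γ_ℓ+c₀)i)·(−1/i²) + σ_ℓ² s²i²·(1/s³) + σ_ℓ² s²i²·(1/i³) satisfies ℒΦ(s,i,𝔳,ℓ) ≤ K·Φ(s,i) for some constant K > 0 independent of (s,i,𝔳,ℓ), where (s,i) ∈ (0,1)², 𝔳 ∈ [0,1], and ℓ ranges over a finite set. -/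

import Mathlib

set_option maxHeartbeats 1000000 in
/-- The Lyapunov function Φ(s,i) = 1/i + 1/s satisfies ℒΦ ≤ K·Φ. -/
theorem lyapunov_drift_bound {M : Type*} [Fintype M] [Nonempty M]
    (μ γ lam ε σ : M → ℝ)
    (hnn : ∀ ℓ : M, 0 ≤ μ ℓ ∧ 0 ≤ γ ℓ ∧ 0 ≤ lam ℓ ∧ 0 ≤ ε ℓ ∧ 0 ≤ σ ℓ)
    (c₀ p₀ q₀ : ℝ) (hc : 0 ≤ c₀) (hp : p₀ ∈ Set.Icc (0:ℝ) 1)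
    (hq : q₀ ∈ Set.Icc (0:ℝ) 1) :
    ∃ K > (0:ℝ), ∀ (s i v : ℝ) (ℓ : M), s ∈ Set.Ioo (0:ℝ) 1 →
      i ∈ Set.Ioo (0:ℝ) 1 → v ∈ Set.Icc (0:ℝ) 1 →
      (μ ℓ * (1 - q₀) - lam ℓ * s * i - (μ ℓ + p₀) * s + γ ℓ * i + ε ℓ * v)
          * (-(1 / s ^ 2))
        + (lam ℓ * s * i - (μ ℓ + γ ℓ + c₀) * i) * (-(1 / i ^ 2))
        + σ ℓ ^ 2 * s ^ 2 * i ^ 2 * (1 / s ^ 3)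
        + σ ℓ ^ 2 * s ^ 2 * i ^ 2 * (1 / i ^ 3)
      ≤ K * (1 / i + 1 / s) := by
  set K : ℝ := 1 + c₀ + p₀ + ∑ ℓ, (μ ℓ + γ ℓ + lam ℓ + σ ℓ ^ 2) with hK
  have hsum : ∀ ℓ : M, μ ℓ + γ ℓ + lam ℓ + σ ℓ ^ 2 ≤
      ∑ ℓ, (μ ℓ + γ ℓ + lam ℓ + σ ℓ ^ 2) := by
    intro ℓ
    refine Finset.single_le_sum (f := fun j => μ j + γ j + lam j + σ j ^ 2) (fun j _ => ?_) (Finset.mem_univ ℓ)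
    obtain ⟨h1, h2, h3, h4, h5⟩ := hnn j
    positivity
  have hsumnn : (0:ℝ) ≤ ∑ ℓ, (μ ℓ + γ ℓ + lam ℓ + σ ℓ ^ 2) :=
    le_trans (by obtain ⟨h1,h2,h3,h4,h5⟩ := hnn (Classical.arbitrary M); positivity)
      (hsum (Classical.arbitrary M))
  have hKpos : 0 < K := by
    have := hp.1; have := hq.1
    simp only [hK]; linarith
  refine ⟨K, hKpos, ?_⟩
  intro s i v ℓ hs hi hv
  obtain ⟨hs0, hs1⟩ := hs
  obtain ⟨hi0, hi1⟩ := hi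
  obtain ⟨hv0, hv1⟩ := hv
  obtain ⟨hμ, hγ, hlam, hε, hσ⟩ := hnn ℓ
  have hC : lam ℓ + μ ℓ + p₀ + σ ℓ ^ 2 ≤ K := by
    have := hsum ℓ; have := hp.1; have := hc; simp only [hK]; nlinarith
  have hD : μ ℓ + γ ℓ + c₀ + σ ℓ ^ 2 ≤ K := by
    have := hsum ℓ; have := hp.1; simp only [hK]; nlinarith
  have hpos : (0:ℝ) < s ^ 2 * i ^ 2 := by positivity
  rw [← mul_le_mul_iff_of_pos_right hpos]
  have hq1 : q₀ ≤ 1 := hq.2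
  have lhs_eq :
      ((μ ℓ * (1 - q₀) - lam ℓ * s * i - (μ ℓ + p₀) * s + γ ℓ * i + ε ℓ * v)
          * (-(1 / s ^ 2))
        + (lam ℓ * s * i - (μ ℓ + γ ℓ + c₀) * i) * (-(1 / i ^ 2))
        + σ ℓ ^ 2 * s ^ 2 * i ^ 2 * (1 / s ^ 3)
        + σ ℓ ^ 2 * s ^ 2 * i ^ 2 * (1 / i ^ 3)) * (s ^ 2 * i ^ 2)
      = (- μ ℓ * (1 - q₀) + lam ℓ * s * i + (μ ℓ + p₀) * s - γ ℓ * i - ε ℓ * v) * i ^ 2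
        + (- lam ℓ * s + (μ ℓ + γ ℓ + c₀)) * s ^ 2 * i
        + σ ℓ ^ 2 * s * i ^ 4 + σ ℓ ^ 2 * s ^ 4 * i := by
    field_simp
    ring
  have rhs_eq : K * (1 / i + 1 / s) * (s ^ 2 * i ^ 2)
      = K * (s ^ 2 * i) + K * (s * i ^ 2) := by
    field_simp
  rw [lhs_eq, rhs_eq]
  nlinarith [mul_nonneg (mul_nonneg hlam hs0.le) (mul_nonneg (sq_nonneg i) (sub_nonneg.2 hi1.le)),
    mul_nonneg (mul_nonneg (sq_nonneg (σ ℓ)) hs0.le)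
      (mul_nonneg (sq_nonneg i) (sub_nonneg.2 (by nlinarith : i ^ 2 ≤ 1))),
    mul_nonneg (mul_nonneg (sq_nonneg (σ ℓ)) hi0.le)
      (mul_nonneg (sq_nonneg s) (sub_nonneg.2 (by nlinarith : s ^ 2 ≤ 1))),
    mul_nonneg (mul_nonneg hμ (sub_nonneg.2 hq1)) (sq_nonneg i),
    mul_nonneg (mul_nonneg hγ hi0.le) (sq_nonneg i),
    mul_nonneg (mul_nonneg hε hv0) (sq_nonneg i),
    mul_nonneg (mul_nonneg hlam hs0.le) (mul_nonneg (sq_nonneg s) hi0.le),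
    mul_nonneg (mul_nonneg (sub_nonneg.2 hC) hs0.le) (sq_nonneg i),
    mul_nonneg (mul_nonneg (sub_nonneg.2 hD) hi0.le) (sq_nonneg s)]
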